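/- Under the assumptions and constructions of the second equivalent form, every minimizer X̄* of ⟨C̄^{(2)}, ·⟩ over Π(r̄_1^{(2)},…,r̄_m^{(2)}) satisfies X̄*_{(n+1, n+1, …, n+1)} = 0; that is, W_{[m]} := Σ_{u ∈ T_{[m]}} X̄*_u = 0. -/

import Mathlib

open Finset

noncomputable section

namespace MPOT

/-- The `k`-th marginal of a tensor indexed by `[n]^m` (functions `Fin m → Fin n`). -/
def marg {m n : ℕ} (X : (Fin m → Fin n) → ℝ) (k : Fin m) (j : Fin n) : ℝ :=
  ∑ v : Fin m → Fin n, if v k = j then X v else 0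

/-- Entrywise (Frobenius) inner product of tensors. -/
def dot {m n : ℕ} (C X : (Fin m → Fin n) → ℝ) : ℝ :=
  ∑ v : Fin m → Fin n, C v * X v

/-- The partial transport polytope `Π^s(r_1, …, r_m)`. -/
def PiPartial {m n : ℕ} (r : Fin m → Fin n → ℝ) (s : ℝ) :
    Set ((Fin m → Fin n) → ℝ) :=
  {X | (∀ v, 0 ≤ X v) ∧ (∀ k j, marg X k j ≤ r k j) ∧ ∑ v : Fin m → Fin n, X v = s}

/-- The transport polytope `Π(a_1, …, a_m)` with equality marginal constraints. -/
def PiEq {m n : ℕ} (a : Fin m → Fin n → ℝ) : Set ((Fin m → Fin n) → ℝ) :=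
  {X | (∀ v, 0 ≤ X v) ∧ ∀ k j, marg X k j = a k j}

/-- Embedding of `[n]^m` into `[n+1]^m`. -/
def emb {m n : ℕ} (v : Fin m → Fin n) : Fin m → Fin (n + 1) :=
  fun i => (v i).castSucc

/-- Restriction of a tensor on `[n+1]^m` to the indices in `[n]^m`. -/
def restr {m n : ℕ} (X : (Fin m → Fin (n + 1)) → ℝ) : (Fin m → Fin n) → ℝ :=
  fun v => X (emb v)

/-- The number of coordinates of `u` equal to `n+1` (i.e. `Fin.last n`); `u ∈ T_S`
with `|S| = nLast u`. -/
def nLast {m n : ℕ} (u : Fin m → Fin (n + 1)) : ℕ :=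
  (univ.filter fun ℓ => u ℓ = Fin.last n).card

/-- Extended cost tensor: the original cost on `T_∅ = [n]^m`, and value `A i` on the
`i`-th layer `∪_{|S| = i} T_S`. -/
def extCost {m n : ℕ} (C : (Fin m → Fin n) → ℝ) (A : ℕ → ℝ) :
    (Fin m → Fin (n + 1)) → ℝ :=
  fun u =>
    if h : ∀ i, u i ≠ Fin.last n then C fun i => (u i).castPred (h i)
    else A (nLast u)

/-- Total mass of `X` on the sublayer `T_S`. -/
def layerSum {m n : ℕ} (X : (Fin m → Fin (n + 1)) → ℝ) (S : Finset (Fin m)) : ℝ :=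
  ∑ u : Fin m → Fin (n + 1), if ∀ ℓ, (u ℓ = Fin.last n ↔ ℓ ∈ S) then X u else 0

/-- First-form extended marginals `r̄_k^{(1)} = [r_k, Σ_r/(m−1) − ‖r_k‖₁ − s/(m−1)]`. -/
def extMarg1 {m n : ℕ} (r : Fin m → Fin n → ℝ) (s : ℝ) : Fin m → Fin (n + 1) → ℝ :=
  fun k => Fin.snoc (r k)
    ((∑ i, ∑ j, r i j) / ((m : ℝ) - 1) - (∑ j, r k j) - s / ((m : ℝ) - 1))

/-- Second-form extended marginals `r̄_k^{(2)} = [r_k, Σ_{i≠k} ‖r_i‖₁ − (m−1)s]`. -/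
def extMarg2 {m n : ℕ} (r : Fin m → Fin n → ℝ) (s : ℝ) : Fin m → Fin (n + 1) → ℝ :=
  fun k => Fin.snoc (r k) ((∑ i ∈ univ.erase k, ∑ j, r i j) - ((m : ℝ) - 1) * s)

end MPOT

open MPOT

/-! Counting the marginals of `X̄` at the value `n+1` gives
`∑ u, (κ(u) - 1) X̄ u = (m - 1) s ≥ 0`, where `κ(u)` is the number of coordinates of `u`
different from `n+1`. The top index `(n+1, …, n+1)` has weight `-1`, so if it carried mass,
some `u` with `κ(u) ≥ 2` would carry mass too. Moving `β` off `u` and `(κ(u) - 1) β` off the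
top index onto the `κ(u)` indices that keep one coordinate of `u` and put `n+1` everywhere else
preserves every marginal. Those indices lie in layer `m - 1`, where the cost is `D (m-1) = 0`,
while the cost at `u` is nonnegative because the concave sequence `D` is nonnegative between
`D 0 ≥ 0` and `D (m-1) = 0`; so the cost drops by at least `(κ(u) - 1) β D m > 0`. -/

theorem nonneg_of_secondDiff_nonpos {D : ℕ → ℝ} {N : ℕ}
    (hΔ : ∀ j, j + 2 ≤ N → D (j + 2) + D j - 2 * D (j + 1) ≤ 0)
    (h0 : 0 ≤ D 0) (hN : 0 ≤ D N) {i : ℕ} (hi : i ≤ N) : 0 ≤ D i := by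
  have hanti : ∀ a b, a ≤ b → b < N → D (b + 1) - D b ≤ D (a + 1) - D a := by
    intro a b hab
    induction b, hab using Nat.le_induction with
    | base => exact fun _ => le_rfl
    | succ b _ ih =>
      intro hb
      linarith [hΔ b (by omega), ih (by omega)]
  by_contra! hneg
  obtain ⟨j₁, hj₁, hdown⟩ : ∃ j ∈ range i, D (j + 1) - D j < 0 :=
    exists_lt_of_sum_lt (by rw [sum_range_sub, sum_const_zero]; linarith)
  obtain ⟨j₂, hj₂, hup⟩ : ∃ j ∈ Ico i N, 0 < D (j + 1) - D j :=
    exists_lt_of_sum_lt (by rw [sum_Ico_sub _ hi, sum_const_zero]; linarith)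
  rw [mem_range] at hj₁
  rw [mem_Ico] at hj₂
  linarith [hanti j₁ j₂ (by omega) hj₂.2]

namespace MPOT

variable {m n : ℕ}

theorem secondDiff_nonpos_of_concave_hyps {D : ℕ → ℝ} (hm : 3 ≤ m)
    (hconc3 : m = 3 → D 2 + D 0 - 2 * D 1 ≤ 0)
    (hconc : 4 ≤ m → ∀ i, 1 ≤ i → i ≤ m - 3 →
      D (i + 1) + D (i - 1) - 2 * D i
          ≤ ((m - 1 - i : ℕ) : ℝ) * (D (i + 2) + D i - 2 * D (i + 1)) ∧
        ((m - 1 - i : ℕ) : ℝ) * (D (i + 2) + D i - 2 * D (i + 1)) ≤ 0)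
    {j : ℕ} (hj : j + 2 ≤ m - 1) : D (j + 2) + D j - 2 * D (j + 1) ≤ 0 := by
  rcases (show m = 3 ∨ 4 ≤ m by omega) with rfl | hm4
  · obtain rfl : j = 0 := by omega
    exact hconc3 rfl
  rcases (show j + 1 ≤ m - 3 ∨ j = m - 3 by omega) with hj' | rfl
  · obtain ⟨hle, hnonpos⟩ := hconc hm4 (j + 1) (by omega) hj'
    exact hle.trans hnonpos
  · have h := (hconc hm4 (m - 3) (by omega) le_rfl).2
    rw [show m - 1 - (m - 3) = 2 by omega, Nat.cast_ofNat] at h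
    linarith

theorem marg_eq_sum_filter (X : (Fin m → Fin n) → ℝ) (k : Fin m) (j : Fin n) :
    marg X k j = ∑ v with v k = j, X v :=
  (sum_filter _ _).symm

theorem marg_add (X Y : (Fin m → Fin n) → ℝ) (k : Fin m) (j : Fin n) :
    marg (X + Y) k j = marg X k j + marg Y k j := by
  simp only [marg_eq_sum_filter, Pi.add_apply, sum_add_distrib]

theorem marg_sub (X Y : (Fin m → Fin n) → ℝ) (k : Fin m) (j : Fin n) :
    marg (X - Y) k j = marg X k j - marg Y k j := by
  simp only [marg_eq_sum_filter, Pi.sub_apply, sum_sub_distrib]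

theorem marg_sum {ι : Type*} (t : Finset ι) (X : ι → (Fin m → Fin n) → ℝ) (k : Fin m)
    (j : Fin n) : marg (∑ i ∈ t, X i) k j = ∑ i ∈ t, marg (X i) k j := by
  simp only [marg_eq_sum_filter, Finset.sum_apply]
  exact sum_comm

theorem marg_single (a : Fin m → Fin n) (c : ℝ) (k : Fin m) (j : Fin n) :
    marg (Pi.single a c) k j = if a k = j then c else 0 := by
  simp [marg_eq_sum_filter, Pi.single_apply]

theorem sum_marg (X : (Fin m → Fin n) → ℝ) (k : Fin m) : ∑ j, marg X k j = ∑ v, X v := by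
  simp only [marg_eq_sum_filter]
  exact sum_fiberwise _ _ _

theorem dot_add (C X Y : (Fin m → Fin n) → ℝ) : dot C (X + Y) = dot C X + dot C Y := by
  simp only [dot, Pi.add_apply, mul_add, sum_add_distrib]

theorem dot_sub (C X Y : (Fin m → Fin n) → ℝ) : dot C (X - Y) = dot C X - dot C Y := by
  simp only [dot, Pi.sub_apply, mul_sub, sum_sub_distrib]

theorem dot_sum {ι : Type*} (C : (Fin m → Fin n) → ℝ) (t : Finset ι)
    (X : ι → (Fin m → Fin n) → ℝ) :
    dot C (∑ i ∈ t, X i) = ∑ i ∈ t, dot C (X i) := by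
  simp only [dot, Finset.sum_apply, mul_sum]
  exact sum_comm

theorem dot_single (C : (Fin m → Fin n) → ℝ) (a : Fin m → Fin n) (c : ℝ) :
    dot C (Pi.single a c) = C a * c := by
  simp [dot, Pi.single_apply]

def nonLast (u : Fin m → Fin (n + 1)) : Finset (Fin m) :=
  univ.filter fun ℓ => u ℓ ≠ Fin.last n

theorem mem_nonLast {u : Fin m → Fin (n + 1)} {k : Fin m} :
    k ∈ nonLast u ↔ u k ≠ Fin.last n := by
  simp [nonLast]

theorem nLast_add_card_nonLast (u : Fin m → Fin (n + 1)) : nLast u + #(nonLast u) = m := by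
  rw [nLast, nonLast, card_filter_add_card_filter_not, card_univ, Fintype.card_fin]

theorem nLast_const_last : nLast (fun _ : Fin m => Fin.last n) = m := by
  simp [nLast]

theorem nLast_update_const_last {k : Fin m} {a : Fin (n + 1)} (ha : a ≠ Fin.last n) :
    nLast (Function.update (fun _ => Fin.last n) k a) = m - 1 := by
  have : (univ.filter fun ℓ => Function.update (fun _ => Fin.last n) k a ℓ = Fin.last n)
      = univ.erase k := by
    ext ℓ
    by_cases hℓ : ℓ = k <;> simp [hℓ, ha]
  rw [nLast, this, card_erase_of_mem (mem_univ k), card_univ, Fintype.card_fin]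

theorem extCost_of_exists_last {C : (Fin m → Fin n) → ℝ} {A : ℕ → ℝ}
    {u : Fin m → Fin (n + 1)} (h : ∃ i, u i = Fin.last n) : extCost C A u = A (nLast u) := by
  rw [extCost, dif_neg (not_forall_not.mpr h)]

theorem extCost_nonneg {C : (Fin m → Fin n) → ℝ} {A : ℕ → ℝ} {u : Fin m → Fin (n + 1)}
    (hC : ∀ v, 0 ≤ C v) (hA : 0 ≤ A (nLast u)) : 0 ≤ extCost C A u := by
  unfold extCost
  split_ifs
  exacts [hC _, hA]

theorem layerSum_univ (X : (Fin m → Fin (n + 1)) → ℝ) :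
    layerSum X univ = X fun _ => Fin.last n := by
  rw [layerSum, sum_eq_single_of_mem (fun _ => Fin.last n) (mem_univ _)]
  · simp
  · intro u _ hu
    rw [if_neg]
    exact fun h => hu (funext fun ℓ => (h ℓ).mpr (mem_univ ℓ))

def splitMove (u : Fin m → Fin (n + 1)) (β : ℝ) : (Fin m → Fin (n + 1)) → ℝ :=
  ∑ k ∈ nonLast u, Pi.single (Function.update (fun _ => Fin.last n) k (u k)) β
    - Pi.single u β - Pi.single (fun _ => Fin.last n) ((#(nonLast u) - 1 : ℝ) * β)

theorem marg_splitMove (u : Fin m → Fin (n + 1)) (β : ℝ) (k : Fin m) (j : Fin (n + 1)) :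
    marg (splitMove u β) k j = 0 := by
  simp only [splitMove, marg_sub, marg_sum, marg_single, Function.update_apply]
  by_cases hj : j = Fin.last n
  · subst hj
    have hterm : ∀ x ∈ nonLast u, (if (if k = x then u x else Fin.last n) = Fin.last n
        then β else 0) = β - if k = x then β else 0 := by
      intro x hx
      by_cases hkx : k = x <;> simp_all [mem_nonLast]
    rw [sum_congr rfl hterm, sum_sub_distrib, sum_const, sum_ite_eq, nsmul_eq_mul]
    by_cases hk : u k = Fin.last n <;> simp [mem_nonLast, hk] <;> ring
  · have hterm : ∀ x ∈ nonLast u, (if (if k = x then u x else Fin.last n) = j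
        then β else 0) = if k = x then (if u k = j then β else 0) else 0 := by
      intro x _
      by_cases hkx : k = x <;> simp [hkx, Ne.symm hj]
    rw [sum_congr rfl hterm, sum_ite_eq]
    by_cases hk : u k = j <;> simp [mem_nonLast, hk, hj, Ne.symm hj]

theorem add_splitMove_mem_PiEq {a : Fin m → Fin (n + 1) → ℝ}
    {X : (Fin m → Fin (n + 1)) → ℝ} (hX : X ∈ PiEq a) {u : Fin m → Fin (n + 1)} {β : ℝ}
    (hnonneg : ∀ v, 0 ≤ (X + splitMove u β) v) : X + splitMove u β ∈ PiEq a :=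
  ⟨hnonneg, fun k j => by rw [marg_add, marg_splitMove, add_zero, hX.2]⟩

theorem add_splitMove_nonneg {X : (Fin m → Fin (n + 1)) → ℝ} (hX : ∀ v, 0 ≤ X v)
    {u : Fin m → Fin (n + 1)} (hu : u ≠ fun _ => Fin.last n) {β : ℝ} (hβ : 0 ≤ β)
    (hβu : β ≤ X u) (hβtop : (#(nonLast u) - 1 : ℝ) * β ≤ X fun _ => Fin.last n)
    (v : Fin m → Fin (n + 1)) : 0 ≤ (X + splitMove u β) v := by
  have hgain : 0 ≤ (∑ k ∈ nonLast u,
      Pi.single (M := fun _ => ℝ) (Function.update (fun _ => Fin.last n) k (u k)) β) v := by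
    rw [Finset.sum_apply]
    exact sum_nonneg fun k _ => by rw [Pi.single_apply]; split_ifs <;> simp [hβ]
  simp only [splitMove, Pi.add_apply, Pi.sub_apply]
  by_cases hvu : v = u
  · rw [hvu, Pi.single_eq_same, Pi.single_eq_of_ne hu]
    linarith [hvu ▸ hgain]
  · rw [Pi.single_eq_of_ne hvu]
    by_cases hvtop : v = fun _ => Fin.last n
    · rw [hvtop, Pi.single_eq_same]
      linarith [hvtop ▸ hgain]
    · rw [Pi.single_eq_of_ne hvtop]
      linarith [hX v]

theorem dot_extCost_splitMove (hm : 2 ≤ m) (C : (Fin m → Fin n) → ℝ) {A : ℕ → ℝ}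
    (hA : A (m - 1) = 0) (u : Fin m → Fin (n + 1)) (β : ℝ) :
    dot (extCost C A) (splitMove u β)
      = -(β * extCost C A u + (#(nonLast u) - 1 : ℝ) * β * A m) := by
  have hsplit : ∀ k ∈ nonLast u,
      extCost C A (Function.update (fun _ => Fin.last n) k (u k)) = 0 := by
    intro k hk
    have : Nontrivial (Fin m) := Fin.nontrivial_iff_two_le.mpr hm
    obtain ⟨ℓ, hℓ⟩ := exists_ne k
    rw [extCost_of_exists_last ⟨ℓ, by simp [hℓ]⟩, nLast_update_const_last (mem_nonLast.1 hk),
      hA]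
  have htop : extCost C A (fun _ => Fin.last n) = A m := by
    rw [extCost_of_exists_last ⟨⟨0, by omega⟩, rfl⟩, nLast_const_last]
  rw [splitMove, dot_sub, dot_sub, dot_sum,
    sum_eq_zero fun k hk => by rw [dot_single, hsplit k hk, zero_mul], dot_single, dot_single, htop]
  ring

theorem exists_mem_PiEq_dot_extCost_lt (hm : 2 ≤ m) {C : (Fin m → Fin n) → ℝ}
    {A : ℕ → ℝ} (hA : A (m - 1) = 0) (hAm : 0 < A m) {a : Fin m → Fin (n + 1) → ℝ}
    {X : (Fin m → Fin (n + 1)) → ℝ} (hX : X ∈ PiEq a) {u : Fin m → Fin (n + 1)}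
    (hK : 2 ≤ #(nonLast u)) (hcu : 0 ≤ extCost C A u) (hu : 0 < X u)
    (htop : 0 < X fun _ => Fin.last n) :
    ∃ Y ∈ PiEq a, dot (extCost C A) Y < dot (extCost C A) X := by
  set κ : ℝ := #(nonLast u) - 1 with hκ_def
  have hκ : 1 ≤ κ := by
    rw [hκ_def, le_sub_iff_add_le]
    exact_mod_cast hK
  set β := min (X u) ((X fun _ => Fin.last n) / κ)
  have hβ : 0 < β := lt_min hu (div_pos htop (by linarith))
  have hu_ne : u ≠ fun _ => Fin.last n := by
    rintro rfl
    simp [nonLast] at hK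
  have hβtop : κ * β ≤ X fun _ => Fin.last n :=
    calc κ * β ≤ κ * ((X fun _ => Fin.last n) / κ) :=
          mul_le_mul_of_nonneg_left (min_le_right _ _) (by linarith)
      _ = X fun _ => Fin.last n := mul_div_cancel₀ _ (by linarith)
  refine ⟨X + splitMove u β,
    add_splitMove_mem_PiEq hX
      (add_splitMove_nonneg hX.1 hu_ne hβ.le (min_le_left _ _) hβtop), ?_⟩
  rw [dot_add, dot_extCost_splitMove hm C hA]
  nlinarith [mul_pos (mul_pos (by linarith : 0 < κ) hβ) hAm, mul_nonneg hβ.le hcu]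

theorem sum_extMarg2 (r : Fin m → Fin n → ℝ) (s : ℝ) (k : Fin m) :
    ∑ j, extMarg2 r s k j = ∑ i, ∑ j, r i j - (m - 1) * s := by
  rw [Fin.sum_univ_castSucc]
  simp only [extMarg2, Fin.snoc_castSucc, Fin.snoc_last]
  rw [sum_erase_eq_sub (mem_univ k)]
  ring

theorem sum_nLast_mul (X : (Fin m → Fin (n + 1)) → ℝ) :
    ∑ v, (nLast v : ℝ) * X v = ∑ k, marg X k (Fin.last n) := by
  simp only [nLast, card_filter, Nat.cast_sum, sum_mul, marg]
  rw [sum_comm]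
  simp

theorem sum_card_nonLast_sub_one_mul (hm : 0 < m) {r : Fin m → Fin n → ℝ} {s : ℝ}
    {X : (Fin m → Fin (n + 1)) → ℝ} (hX : X ∈ PiEq (extMarg2 r s)) :
    ∑ v, ((#(nonLast v) : ℝ) - 1) * X v = (m - 1) * s := by
  have hmass : ∑ v, X v = ∑ i, ∑ j, r i j - (m - 1) * s := by
    rw [← sum_marg X ⟨0, hm⟩]
    simp only [hX.2]
    exact sum_extMarg2 r s _
  have hlast :
      ∑ k, marg X k (Fin.last n) = (m - 1) * ∑ i, ∑ j, r i j - m * ((m - 1) * s) := by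
    simp only [hX.2, extMarg2, Fin.snoc_last, sum_erase_eq_sub (mem_univ _)]
    rw [sum_sub_distrib, sum_sub_distrib]
    simp only [sum_const, card_univ, Fintype.card_fin, nsmul_eq_mul, sub_left_inj]
    ring
  have hcard : ∀ v : Fin m → Fin (n + 1), (#(nonLast v) : ℝ) = m - nLast v := fun v => by
    rw [eq_sub_iff_add_eq', ← Nat.cast_add, nLast_add_card_nonLast]
  calc ∑ v, ((#(nonLast v) : ℝ) - 1) * X v
      = (m - 1) * ∑ v, X v - ∑ v, (nLast v : ℝ) * X v := by
        rw [mul_sum, ← sum_sub_distrib]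
        exact sum_congr rfl fun v _ => by rw [hcard]; ring
    _ = (m - 1) * s := by
        rw [hmass, sum_nLast_mul, hlast]
        ring

theorem exists_two_le_card_nonLast_pos (hm : 0 < m) {r : Fin m → Fin n → ℝ} {s : ℝ}
    (hs : 0 ≤ s) {X : (Fin m → Fin (n + 1)) → ℝ} (hX : X ∈ PiEq (extMarg2 r s))
    (htop : 0 < X fun _ => Fin.last n) : ∃ u, 2 ≤ #(nonLast u) ∧ 0 < X u := by
  by_contra! h
  have hle : ∀ v, ((#(nonLast v) : ℝ) - 1) * X v ≤ 0 := fun v => by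
    rcases lt_or_ge #(nonLast v) 2 with hv | hv
    · have : (#(nonLast v) : ℝ) ≤ 1 := by exact_mod_cast Nat.le_of_lt_succ hv
      exact mul_nonpos_of_nonpos_of_nonneg (by linarith) (hX.1 v)
    · rw [le_antisymm (h v hv) (hX.1 v), mul_zero]
  have hneg : ((#(nonLast fun _ : Fin m => Fin.last n) : ℝ) - 1) * X (fun _ => Fin.last n)
      < 0 := by
    simp [nonLast, htop]
  have hsum := sum_lt_sum (fun v _ => hle v) ⟨_, mem_univ _, hneg⟩
  rw [sum_card_nonLast_sub_one_mul hm hX, sum_const_zero] at hsum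
  have : (1 : ℝ) ≤ m := by exact_mod_cast hm
  nlinarith

end MPOT

theorem mpot_second_form_top_layer_zero_general {m n : ℕ} (hm : 3 ≤ m)
    (C : (Fin m → Fin n) → ℝ) (hC : ∀ v, 0 ≤ C v)
    (r : Fin m → Fin n → ℝ)
    (s : ℝ) (hs0 : 0 ≤ s)
    (D : ℕ → ℝ) (hD0 : IsGreatest (Set.range C) (D 0))
    (hDm1 : D (m - 1) = 0) (hDm : 0 < D m)
    (hconc3 : m = 3 → D 2 + D 0 - 2 * D 1 ≤ 0)
    (hconc : 4 ≤ m → ∀ i, 1 ≤ i → i ≤ m - 3 →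
      D (i + 1) + D (i - 1) - 2 * D i
          ≤ ((m - 1 - i : ℕ) : ℝ) * (D (i + 2) + D i - 2 * D (i + 1)) ∧
        ((m - 1 - i : ℕ) : ℝ) * (D (i + 2) + D i - 2 * D (i + 1)) ≤ 0)
    (Xb : (Fin m → Fin (n + 1)) → ℝ) (hmem : Xb ∈ PiEq (extMarg2 r s))
    (hopt : ∀ Y ∈ PiEq (extMarg2 r s), dot (extCost C D) Xb ≤ dot (extCost C D) Y) :
    Xb (fun _ => Fin.last n) = 0 ∧ layerSum Xb Finset.univ = 0 := by
  have hD0_nonneg : 0 ≤ D 0 := by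
    obtain ⟨v, hv⟩ := hD0.1
    exact hv ▸ hC v
  have hD_nonneg : ∀ i ≤ m - 1, 0 ≤ D i := fun i =>
    nonneg_of_secondDiff_nonpos (fun _ hj => secondDiff_nonpos_of_concave_hyps hm hconc3 hconc hj)
      hD0_nonneg hDm1.ge
  have htop : Xb (fun _ => Fin.last n) = 0 := by
    refine ((hmem.1 _).lt_or_eq.resolve_left fun hpos => ?_).symm
    obtain ⟨u, hK, hu⟩ := exists_two_le_card_nonLast_pos (by omega) hs0 hmem hpos
    have hcu : 0 ≤ extCost C D u :=
      extCost_nonneg hC (hD_nonneg _ (by have := nLast_add_card_nonLast u; omega))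
    obtain ⟨Y, hY, hlt⟩ :=
      exists_mem_PiEq_dot_extCost_lt (by omega) hDm1 hDm hmem hK hcu hu hpos
    exact (hopt Y hY).not_gt hlt
  exact ⟨htop, (layerSum_univ Xb).trans htop⟩

/-- Step 2 of the proof of Theorem 3.2: under the assumptions of the
second equivalent form, every minimizer vanishes at the index `(n+1, …, n+1)`,
i.e. `W_{[m]} = 0`. -/
theorem mpot_second_form_top_layer_zero {m n : ℕ} (hm : 3 ≤ m) (hn : 1 ≤ n)
    (C : (Fin m → Fin n) → ℝ) (hC : ∀ v, 0 ≤ C v)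
    (r : Fin m → Fin n → ℝ) (hr : ∀ k j, 0 ≤ r k j)
    (s : ℝ) (hs0 : 0 ≤ s) (hs : ∀ k, s ≤ ∑ j, r k j)
    (D : ℕ → ℝ) (hD0 : IsGreatest (Set.range C) (D 0))
    (hDm1 : D (m - 1) = 0) (hDm : 0 < D m)
    (hconc3 : m = 3 → D 2 + D 0 - 2 * D 1 ≤ 0)
    (hconc : 4 ≤ m → ∀ i, 1 ≤ i → i ≤ m - 3 →
      D (i + 1) + D (i - 1) - 2 * D i
          ≤ ((m - 1 - i : ℕ) : ℝ) * (D (i + 2) + D i - 2 * D (i + 1)) ∧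
        ((m - 1 - i : ℕ) : ℝ) * (D (i + 2) + D i - 2 * D (i + 1)) ≤ 0)
    (Xb : (Fin m → Fin (n + 1)) → ℝ) (hmem : Xb ∈ PiEq (extMarg2 r s))
    (hopt : ∀ Y ∈ PiEq (extMarg2 r s), dot (extCost C D) Xb ≤ dot (extCost C D) Y) :
    Xb (fun _ => Fin.last n) = 0 ∧ layerSum Xb Finset.univ = 0 :=
  mpot_second_form_top_layer_zero_general hm C hC r s hs0 D hD0 hDm1 hDm hconc3 hconc Xb hmem hopt
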